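/- arXiv:cs/0404051 — 5 statements merged into one kernel-verified Lean document; each statement's English description precedes it below -/
import Mathlib

section
/- Every directed subset D of P has a least upper bound ⊔D with respect to ≤, given pointwise by: ⊔D(Σ) = ∅ if d(Σ) = ∅ for every d ∈ D, and ⊔D(Σ) = Σ' if there exists d ∈ D with d(Σ) = Σ' ≠ ∅ (this value is independent of the choice of such d). -/
open scoped Classical

/-- The order on `P`, the set of total functions from situations (`Set S`) to
situations: `f₁ ≤ f₂` iff for every situation `Σ`, `f₁ Σ ≠ ∅ → f₁ Σ = f₂ Σ`. -/
def ple {S : Type*} (f₁ f₂ : Set S → Set S) : Prop :=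
  ∀ Sig : Set S, f₁ Sig ≠ ∅ → f₁ Sig = f₂ Sig

/-- `f` is a least upper bound of `D ⊆ P` with respect to `ple`. -/
def IsLubP {S : Type*} (D : Set (Set S → Set S)) (f : Set S → Set S) : Prop :=
  (∀ d ∈ D, ple d f) ∧ ∀ g : Set S → Set S, (∀ d ∈ D, ple d g) → ple f g

/-- `D ⊆ P` is directed: every finite subset of `D` has a least upper bound
that exists and belongs to `D`. -/
def DirectedP {S : Type*} (D : Set (Set S → Set S)) : Prop :=
  ∀ F : Set (Set S → Set S), F ⊆ D → F.Finite → ∃ f ∈ D, IsLubP F f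

/-- The operator `ℱ_{g,T}` associated with a while loop whose test condition is
satisfied exactly by the states in `T` and whose body has effect `g`. -/
noncomputable def Fop {S : Type*} (T : Set S) (g : Set S → Set S)
    (f : Set S → Set S) : Set S → Set S := fun Sig =>
  if Sig ∩ T = ∅ then Sig
  else if Sig ≠ ∅ ∧ Sig ⊆ T then f (g Sig)
  else ∅

/-- The powers of `ℱ`: `ℱ↑0 = f_∅` and `ℱ↑(n+1) = ℱ(ℱ↑n)`. -/
noncomputable def Fpow {S : Type*} (T : Set S) (g : Set S → Set S) :
    ℕ → (Set S → Set S)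
  | 0 => fun _ => ∅
  | n + 1 => Fop T g (Fpow T g n)

/-- Every directed subset `D` of `P` has a least upper bound `⊔D`, given
pointwise by: `⊔D Σ = ∅` if `d Σ = ∅` for every `d ∈ D`, and `⊔D Σ = Σ'`
whenever some `d ∈ D` has `d Σ = Σ' ≠ ∅` (independently of the choice of
such a `d`). -/
theorem directed_lub_exists {S : Type*} (D : Set (Set S → Set S))
    (hD : DirectedP D) :
    ∃ f : Set S → Set S, IsLubP D f ∧
      (∀ Sig : Set S, (∀ d ∈ D, d Sig = ∅) → f Sig = ∅) ∧
      (∀ Sig Sig' : Set S, Sig' ≠ ∅ → (∃ d ∈ D, d Sig = Sig') →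
        f Sig = Sig') := by
  classical
  -- consistency: any two elements of D agreeing on nonempty values coincide
  have hcons : ∀ d₁ ∈ D, ∀ d₂ ∈ D, ∀ Sig : Set S,
      d₁ Sig ≠ ∅ → d₂ Sig ≠ ∅ → d₁ Sig = d₂ Sig := by
    intro d₁ h₁ d₂ h₂ Sig hn₁ hn₂
    obtain ⟨u, _, hub, _⟩ := hD {d₁, d₂}
      (by intro x hx; rcases hx with h | h <;> simp_all)
      ((Set.finite_singleton _).insert _)
    have e₁ := hub d₁ (by simp) Sig hn₁
    have e₂ := hub d₂ (by simp) Sig hn₂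
    rw [e₁, e₂]
  set f : Set S → Set S := fun Sig =>
    if h : ∃ d ∈ D, d Sig ≠ ∅ then h.choose Sig else ∅ with hf
  have key : ∀ Sig : Set S, ∀ d ∈ D, d Sig ≠ ∅ → f Sig = d Sig := by
    intro Sig d hd hn
    have h : ∃ d ∈ D, d Sig ≠ ∅ := ⟨d, hd, hn⟩
    simp only [hf, dif_pos h]
    exact hcons h.choose h.choose_spec.1 d hd Sig h.choose_spec.2 hn
  refine ⟨f, ⟨?_, ?_⟩, ?_, ?_⟩
  · intro d hd Sig hn
    exact (key Sig d hd hn).symm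
  · intro g hg Sig hn
    by_cases h : ∃ d ∈ D, d Sig ≠ ∅
    · obtain ⟨d, hd, hdn⟩ := h
      rw [key Sig d hd hdn]
      exact hg d hd Sig hdn
    · exact absurd (by simp only [hf, dif_neg h]) hn
  · intro Sig hall
    have h : ¬ ∃ d ∈ D, d Sig ≠ ∅ := by
      push_neg; exact hall
    simp only [hf, dif_neg h]
  · rintro Sig Sig' hn ⟨d, hd, hds⟩
    rw [key Sig d hd (hds ▸ hn), hds]
end

section
/- For every set of states T ⊆ S and every function g : Set S → Set S, the operator ℱ = ℱ_{g,T} is continuous with respect to ≤: for every directed set D ⊆ P, the function ℱ(⊔D) is the least upper bound of the set {ℱ(d) : d ∈ D}, where ⊔D denotes the least upper bound of D. -/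
open scoped Classical

/-- If `fD` is the lub of `D` and `fD Σ ≠ ∅`, the value is attained by some `d ∈ D`. -/
lemma lub_attained {S : Type*} (D : Set (Set S → Set S)) (fD : Set S → Set S)
    (hfD : IsLubP D fD) (Sig : Set S) (h : fD Sig ≠ ∅) :
    ∃ d ∈ D, d Sig = fD Sig := by
  by_contra hc
  push_neg at hc
  have hzero : ∀ d ∈ D, d Sig = ∅ := by
    intro d hd
    by_contra hne
    exact hc d hd (hfD.1 d hd Sig hne)
  have hub : ∀ d ∈ D, ple d (fun Sig2 => if Sig2 = Sig then ∅ else fD Sig2) := by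
    intro d hd Sig2 hne
    by_cases he : Sig2 = Sig
    · exact absurd (he ▸ hzero d hd) (he ▸ hne)
    · simp only [he, if_false]
      exact hfD.1 d hd Sig2 hne
  have := hfD.2 _ hub Sig h
  simp at this
  exact h this

/-- The operator `ℱ = ℱ_{g,T}` is continuous with respect to `≤`: for every
directed set `D ⊆ P`, `ℱ(⊔D)` is the least upper bound of the set
`{ℱ(d) : d ∈ D}`. -/
theorem Fop_continuous {S : Type*} (T : Set S) (g : Set S → Set S)
    (D : Set (Set S → Set S)) (hD : DirectedP D)
    (fD : Set S → Set S) (hfD : IsLubP D fD) :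
    IsLubP (Fop T g '' D) (Fop T g fD) := by
  obtain ⟨d₀, hd₀, -⟩ := hD ∅ (Set.empty_subset D) Set.finite_empty
  constructor
  · rintro _ ⟨d, hd, rfl⟩ Sig hne
    by_cases h1 : Sig ∩ T = ∅
    · simp [Fop, h1]
    by_cases h2 : Sig ≠ ∅ ∧ Sig ⊆ T
    · simp only [Fop] at hne ⊢
      simp only [if_neg h1, if_pos h2] at hne ⊢
      exact hfD.1 d hd _ hne
    · simp only [Fop] at hne
      simp only [if_neg h1, if_neg h2] at hne
      exact absurd rfl hne
  · intro h hub Sig hne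
    by_cases h1 : Sig ∩ T = ∅
    · simp only [Fop, h1, if_true] at hne ⊢
      have := hub _ ⟨d₀, hd₀, rfl⟩ Sig
      simp only [Fop] at this
      simp only [if_pos h1] at this
      exact this hne
    by_cases h2 : Sig ≠ ∅ ∧ Sig ⊆ T
    · simp only [Fop] at hne ⊢
      simp only [if_neg h1, if_pos h2] at hne ⊢
      obtain ⟨d, hd, hdeq⟩ := lub_attained D fD hfD (g Sig) hne
      have := hub _ ⟨d, hd, rfl⟩ Sig
      simp only [Fop] at this
      simp only [if_neg h1, if_pos h2, hdeq] at this
      exact this hne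
    · simp only [Fop] at hne
      simp only [if_neg h1, if_neg h2] at hne
      exact absurd rfl hne
end

section
/- The powers of ℱ form an increasing chain: ℱ↑n ≤ ℱ↑(n+1) for every natural number n. Consequently the set {ℱ↑n : n ∈ ℕ} is directed (with respect to ≤) and its least upper bound ℱ↑ω exists in P, so the powers of ℱ are correctly defined. -/
open scoped Classical

/-!
`ℱ` is monotone for `≤` and `f_∅` is the least element of `P`, so the powers form a chain by
induction. Since `f₁ ≤ f₂` only lets `f₂` differ from `f₁` where `f₁` is `∅`, two members of a
chain agree at every situation where both are non-empty; the least upper bound of a chain takes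
that common value, and `∅` where every member is `∅`. A finite subset of the chain of powers has
a greatest element, or is empty and has least upper bound `f_∅ = ℱ↑0`.
-/

section ple

variable {S : Type*}

lemma ple_refl (f : Set S → Set S) : ple f f := fun _ _ => rfl

lemma ple_trans {f₁ f₂ f₃ : Set S → Set S} (h₁₂ : ple f₁ f₂) (h₂₃ : ple f₂ f₃) :
    ple f₁ f₃ :=
  fun Sig hne => (h₁₂ Sig hne).trans (h₂₃ Sig (h₁₂ Sig hne ▸ hne))

lemma ple_const_empty (f : Set S → Set S) : ple (fun _ => ∅) f :=
  fun _ hne => absurd rfl hne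

lemma isLubP_empty : IsLubP (∅ : Set (Set S → Set S)) (fun _ => ∅) :=
  ⟨fun _ hd => absurd hd (Set.notMem_empty _), fun g _ => ple_const_empty g⟩

lemma isLubP_of_mem {D : Set (Set S → Set S)} {f : Set S → Set S} (hf : f ∈ D)
    (hub : ∀ d ∈ D, ple d f) : IsLubP D f :=
  ⟨hub, fun _ hg => hg f hf⟩

lemma IsChain.ple_eq {D : Set (Set S → Set S)} (hD : IsChain ple D)
    {d₁ d₂ : Set S → Set S} (hd₁ : d₁ ∈ D) (hd₂ : d₂ ∈ D) {Sig : Set S}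
    (hne₁ : d₁ Sig ≠ ∅) (hne₂ : d₂ Sig ≠ ∅) : d₁ Sig = d₂ Sig := by
  obtain rfl | hne := eq_or_ne d₁ d₂
  · rfl
  rcases hD hd₁ hd₂ hne with h | h
  exacts [h Sig hne₁, (h Sig hne₂).symm]

lemma IsChain.exists_isLubP {D : Set (Set S → Set S)} (hD : IsChain ple D) :
    ∃ f, IsLubP D f := by
  let sup : Set S → Set S := fun Sig =>
    if h : ∃ d ∈ D, d Sig ≠ ∅ then h.choose Sig else ∅
  have sup_eq : ∀ d ∈ D, ∀ Sig, d Sig ≠ ∅ → sup Sig = d Sig := by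
    intro d hd Sig hne
    have h : ∃ d ∈ D, d Sig ≠ ∅ := ⟨d, hd, hne⟩
    simp only [sup, dif_pos h]
    exact hD.ple_eq h.choose_spec.1 hd h.choose_spec.2 hne
  refine ⟨sup, fun d hd Sig hne => (sup_eq d hd Sig hne).symm, fun f hf Sig hne => ?_⟩
  obtain ⟨d, hd, hdne⟩ : ∃ d ∈ D, d Sig ≠ ∅ := by
    by_contra h
    simp [sup, dif_neg h] at hne
  rw [sup_eq d hd Sig hdne]
  exact hf d hd Sig hdne

variable {u : ℕ → Set S → Set S}

lemma ple_of_le_of_ple_succ (hu : ∀ n, ple (u n) (u (n + 1))) {m n : ℕ} (hmn : m ≤ n) :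
    ple (u m) (u n) := by
  induction n, hmn using Nat.le_induction with
  | base => exact ple_refl _
  | succ n _ ih => exact ple_trans ih (hu n)

lemma isChain_range_of_ple_succ (hu : ∀ n, ple (u n) (u (n + 1))) :
    IsChain ple (Set.range u) := by
  rintro _ ⟨m, rfl⟩ _ ⟨n, rfl⟩ -
  rcases le_total m n with h | h
  exacts [Or.inl (ple_of_le_of_ple_succ hu h), Or.inr (ple_of_le_of_ple_succ hu h)]

lemma directedP_range_of_ple_succ (hu₀ : u 0 = fun _ => ∅)
    (hu : ∀ n, ple (u n) (u (n + 1))) : DirectedP (Set.range u) := by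
  intro F hF hFfin
  obtain ⟨t, -, ht, rfl⟩ := hFfin.exists_subset_finite_image_eq (Set.image_univ ▸ hF)
  rcases t.eq_empty_or_nonempty with rfl | htne
  · exact ⟨u 0, ⟨0, rfl⟩, by simpa [hu₀] using isLubP_empty⟩
  obtain ⟨N, hN, hmax⟩ := Set.exists_max_image t id ht htne
  refine ⟨u N, ⟨N, rfl⟩, isLubP_of_mem ⟨N, hN, rfl⟩ ?_⟩
  rintro _ ⟨n, hn, rfl⟩
  exact ple_of_le_of_ple_succ hu (hmax n hn)

end ple

lemma Fop_ple_Fop {S : Type*} (T : Set S) (g : Set S → Set S) {f₁ f₂ : Set S → Set S}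
    (h : ple f₁ f₂) : ple (Fop T g f₁) (Fop T g f₂) := by
  intro Sig hne
  simp only [Fop] at hne ⊢
  split_ifs at hne ⊢
  · rfl
  · exact h _ hne
  · rfl

lemma Fpow_ple_succ {S : Type*} (T : Set S) (g : Set S → Set S) (n : ℕ) :
    ple (Fpow T g n) (Fpow T g (n + 1)) := by
  induction n with
  | zero => exact ple_const_empty _
  | succ n ih => exact Fop_ple_Fop T g ih

/-- The powers of `ℱ` form an increasing chain: `ℱ↑n ≤ ℱ↑(n+1)` for every `n`.
Consequently the set `{ℱ↑n : n ∈ ℕ}` is directed and its least upper bound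
`ℱ↑ω` exists in `P`. -/
theorem Fpow_chain_directed_lub {S : Type*} (T : Set S) (g : Set S → Set S) :
    (∀ n : ℕ, ple (Fpow T g n) (Fpow T g (n + 1))) ∧
    DirectedP {f : Set S → Set S | ∃ n : ℕ, f = Fpow T g n} ∧
    ∃ fω : Set S → Set S,
      IsLubP {f : Set S → Set S | ∃ n : ℕ, f = Fpow T g n} fω := by
  have hstep := Fpow_ple_succ T g
  have hrange : {f : Set S → Set S | ∃ n : ℕ, f = Fpow T g n} = Set.range (Fpow T g) := by
    ext; simp [eq_comm]
  rw [hrange]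
  exact ⟨hstep, directedP_range_of_ple_succ rfl hstep,
    (isChain_range_of_ple_succ hstep).exists_isLubP⟩
end

section
/- The chain of powers of ℱ is pointwise stable once nonempty: for natural numbers m ≤ n and any situation Σ, if ℱ↑m(Σ) ≠ ∅ then ℱ↑n(Σ) = ℱ↑m(Σ) and also ℱ↑ω(Σ) = ℱ↑m(Σ). -/
open scoped Classical

/-- The chain of powers of `ℱ` is pointwise stable once nonempty: if `m ≤ n`
and `ℱ↑m Σ ≠ ∅`, then `ℱ↑n Σ = ℱ↑m Σ` and also `ℱ↑ω Σ = ℱ↑m Σ`. -/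
theorem Fpow_stable {S : Type*} (T : Set S) (g : Set S → Set S)
    (fω : Set S → Set S)
    (hlub : IsLubP {f : Set S → Set S | ∃ n : ℕ, f = Fpow T g n} fω)
    (m n : ℕ) (hmn : m ≤ n) (Sig : Set S) (hne : Fpow T g m Sig ≠ ∅) :
    Fpow T g n Sig = Fpow T g m Sig ∧ fω Sig = Fpow T g m Sig := by
  have hop : ∀ f f' : Set S → Set S, ple f f' → ple (Fop T g f) (Fop T g f') := by
    intro f f' h Sig hne
    unfold Fop at *
    split_ifs at hne ⊢ with h1 h2
    · rfl
    · exact h _ hne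
    · exact absurd rfl hne
  have hchain : ∀ k : ℕ, ple (Fpow T g k) (Fpow T g (k + 1)) := by
    intro k
    induction k with
    | zero => intro Sig hne; exact absurd rfl hne
    | succ k ih => exact hop _ _ ih
  have hle : ∀ m n : ℕ, m ≤ n → ple (Fpow T g m) (Fpow T g n) := by
    intro m n hmn
    induction hmn with
    | refl => intro Sig _; rfl
    | @step k h ih =>
      intro Sig hne
      have h1 := ih Sig hne
      have hne' : Fpow T g k Sig ≠ ∅ := h1 ▸ hne
      exact h1.trans (hchain k Sig hne')
  have h1 : Fpow T g n Sig = Fpow T g m Sig := (hle m n hmn Sig hne).symm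
  have h2 : fω Sig = Fpow T g m Sig :=
    (hlub.1 (Fpow T g m) ⟨m, rfl⟩ Sig hne).symm
  exact ⟨h1, h2⟩
end

section
/- The least fixed point ℱ↑ω computes exactly the terminating iteration of the loop: for a situation Σ, let Σ₀ = Σ and Σ_{i+1} = g(Σ_i) be the iterates of g starting from Σ. If there exists k such that Σ_i ≠ ∅ and Σ_i ⊆ T for every i < k, and Σ_k ∩ T = ∅, then ℱ↑ω(Σ) = Σ_k (for the least such k); if no such k exists, then ℱ↑ω(Σ) = ∅. -/
open scoped Classical

def Term {S : Type*} (T : Set S) (g : Set S → Set S) (Sig : Set S) (k : ℕ) : Prop :=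
  (∀ i < k, g^[i] Sig ≠ ∅ ∧ g^[i] Sig ⊆ T) ∧ g^[k] Sig ∩ T = ∅

lemma Term_unique {S : Type*} {T : Set S} {g : Set S → Set S} {Sig : Set S}
    {k k' : ℕ} (h : Term T g Sig k) (h' : Term T g Sig k') : k = k' := by
  have key : ∀ a b : ℕ, a < b → Term T g Sig a → Term T g Sig b → False := by
    intro a b hab ha hb
    obtain ⟨hne, hsub⟩ := hb.1 a hab
    have : g^[a] Sig ∩ T = g^[a] Sig := Set.inter_eq_left.mpr hsub
    exact hne (this ▸ ha.2)
  rcases Nat.lt_trichotomy k k' with h1 | h1 | h1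
  · exact absurd (key _ _ h1 h h') id
  · exact h1
  · exact absurd (key _ _ h1 h' h) id

lemma Fpow_char {S : Type*} (T : Set S) (g : Set S → Set S) :
    ∀ n (Sig : Set S),
      (∀ k, Term T g Sig k → k < n → Fpow T g n Sig = g^[k] Sig) ∧
      ((¬ ∃ k, k < n ∧ Term T g Sig k) → Fpow T g n Sig = ∅) := by
  intro n
  induction n with
  | zero =>
    intro Sig
    exact ⟨fun k _ hk => absurd hk (Nat.not_lt_zero k), fun _ => rfl⟩
  | succ n ih =>
    intro Sig
    by_cases h0 : Sig ∩ T = ∅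
    · have hfp : Fpow T g (n+1) Sig = Sig := by simp [Fpow, Fop, h0]
      have ht0 : Term T g Sig 0 := ⟨fun i hi => absurd hi (Nat.not_lt_zero i), h0⟩
      constructor
      · intro k hk _
        have : k = 0 := (Term_unique hk ht0)
        subst this; simpa using hfp
      · intro hno
        exact absurd ⟨0, Nat.succ_pos n, ht0⟩ hno
    · by_cases h1 : Sig ≠ ∅ ∧ Sig ⊆ T
      · have hfp : Fpow T g (n+1) Sig = Fpow T g n (g Sig) := by
          simp [Fpow, Fop, h0, h1]
        have hshift : ∀ k, Term T g Sig (k+1) ↔ Term T g (g Sig) k := by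
          intro k
          constructor
          · intro h
            refine ⟨fun i hi => ?_, ?_⟩
            · have := h.1 (i+1) (Nat.succ_lt_succ hi)
              simpa [Function.iterate_succ_apply] using this
            · have := h.2
              simpa [Function.iterate_succ_apply] using this
          · intro h
            refine ⟨fun i hi => ?_, ?_⟩
            · cases i with
              | zero => simpa using h1
              | succ j =>
                have := h.1 j (Nat.lt_of_succ_lt_succ hi)
                simpa [Function.iterate_succ_apply] using this
            · have := h.2
              simpa [Function.iterate_succ_apply] using this
        have hno0 : ¬ Term T g Sig 0 := fun h => h0 h.2
        constructor
        · intro k hk hkn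
          cases k with
          | zero => exact absurd hk hno0
          | succ j =>
            have := (ih (g Sig)).1 j ((hshift j).mp hk) (Nat.lt_of_succ_lt_succ hkn)
            rw [hfp, this, Function.iterate_succ_apply]
        · intro hno
          rw [hfp]
          apply (ih (g Sig)).2
          rintro ⟨k, hkn, hk⟩
          exact hno ⟨k+1, Nat.succ_lt_succ hkn, (hshift k).mpr hk⟩
      · have hfp : Fpow T g (n+1) Sig = ∅ := by simp [Fpow, Fop, h0, h1]
        have hno : ∀ k, ¬ Term T g Sig k := by
          intro k hk
          cases k with
          | zero => exact h0 hk.2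
          | succ j =>
            have := hk.1 0 (Nat.succ_pos j)
            exact h1 ⟨by simpa using this.1, by simpa using this.2⟩
        exact ⟨fun k hk _ => absurd hk (hno k), fun _ => hfp⟩

lemma fomega_empty {S : Type*} {T : Set S} {g : Set S → Set S}
    {fω : Set S → Set S}
    (hlub : IsLubP {f : Set S → Set S | ∃ n : ℕ, f = Fpow T g n} fω)
    {Sig : Set S} (hall : ∀ n, Fpow T g n Sig = ∅) : fω Sig = ∅ := by
  set h : Set S → Set S := fun Sig' => if Sig' = Sig then ∅ else fω Sig' with hh
  have hub : ∀ d ∈ {f : Set S → Set S | ∃ n : ℕ, f = Fpow T g n}, ple d h := by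
    rintro d ⟨n, rfl⟩ Sig' hne
    by_cases hs : Sig' = Sig
    · exact absurd (hs ▸ hall n) hne
    · have := hlub.1 (Fpow T g n) ⟨n, rfl⟩ Sig' hne
      simp [hh, hs, this]
  have hle := hlub.2 h hub
  by_contra hne
  have := hle Sig hne
  simp [hh] at this
  exact hne this

/-- The least fixed point `ℱ↑ω` computes exactly the terminating iteration of
the while loop: with iterates `Σᵢ = g^[i] Σ` (so `Σ₀ = Σ`, `Σ_{i+1} = g Σᵢ`),
if there is `k` with `Σᵢ ≠ ∅` and `Σᵢ ⊆ T` for all `i < k` and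
`Σ_k ∩ T = ∅`, then `ℱ↑ω Σ = Σ_k` (such a `k` is automatically least, indeed
unique); if no such `k` exists, then `ℱ↑ω Σ = ∅`. -/
theorem Fpow_omega_iterates {S : Type*} (T : Set S) (g : Set S → Set S)
    (fω : Set S → Set S)
    (hlub : IsLubP {f : Set S → Set S | ∃ n : ℕ, f = Fpow T g n} fω)
    (Sig : Set S) :
    (∀ k : ℕ, (∀ i < k, g^[i] Sig ≠ ∅ ∧ g^[i] Sig ⊆ T) →
        g^[k] Sig ∩ T = ∅ → fω Sig = g^[k] Sig) ∧
    ((¬ ∃ k : ℕ, (∀ i < k, g^[i] Sig ≠ ∅ ∧ g^[i] Sig ⊆ T) ∧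
        g^[k] Sig ∩ T = ∅) → fω Sig = ∅) := by
  constructor
  · intro k hkiter hkT
    have hterm : Term T g Sig k := ⟨hkiter, hkT⟩
    by_cases hne : g^[k] Sig = ∅
    · rw [hne]
      apply fomega_empty hlub
      intro n
      by_cases hex : ∃ k', k' < n ∧ Term T g Sig k'
      · obtain ⟨k', _, hk'⟩ := hex
        have := Term_unique hk' hterm
        subst this
        rw [(Fpow_char T g n Sig).1 k' hk' (by omega), hne]
      · exact (Fpow_char T g n Sig).2 hex
    · have hfp : Fpow T g (k+1) Sig = g^[k] Sig :=
        (Fpow_char T g (k+1) Sig).1 k hterm (Nat.lt_succ_self k)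
      have := hlub.1 (Fpow T g (k+1)) ⟨k+1, rfl⟩ Sig (by rw [hfp]; exact hne)
      rw [← this, hfp]
  · intro hno
    apply fomega_empty hlub
    intro n
    apply (Fpow_char T g n Sig).2
    rintro ⟨k, _, hk⟩
    exact hno ⟨k, hk.1, hk.2⟩
end
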